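/- Let d ≥ 1 be an integer and let μ be a probability measure on ℝ_+^d. Then μ is monotone if and only if for every i, j ∈ {1,…,d}, one has (μ ⊗ μ)({ (y,y') ∈ ℝ_+^d × ℝ_+^d : y_i ≥ y'_i or y_j ≤ y'_j }) = 1. -/

import Mathlib

/-!
If `μ` is the law of `q(U)` with `q` coordinatewise increasing, two independent samples `q(s)`,
`q(t)` are always ordered, which gives the full-measure condition. Conversely, the condition says
that for all `i, j, a, b` the events `{y_i ≤ a}` and `{y_j ≤ b}` are nested up to `μ`-null sets,
so the mass of a lower orthant `{y ≤ x}` is the least of the marginal masses `F_k(x_k)`. The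
coordinatewise quantile map `q = (F_k⁻¹)_k` is increasing and `q(U) ≤ x` exactly when
`U ≤ min_k F_k(x_k)`, so `q(U)` and `μ` agree on lower orthants, which generate the Borel sets.
-/

open MeasureTheory

/-- The nonnegative orthant `ℝ_+^d` in `ℝ^d`. -/
def orthant (d : ℕ) : Set (EuclideanSpace ℝ (Fin d)) := {x | ∀ i, 0 ≤ x i}

/-- A probability measure `μ` on `ℝ_+^d` is monotone if it is the law of `q(U)` for some
increasing map `q : [0,1) → ℝ_+^d`, with `U` uniform on `[0,1)`.  (Such a `q` is automatically
almost-everywhere measurable.) -/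
def IsMonotoneMeasure (d : ℕ) (μ : Measure (EuclideanSpace ℝ (Fin d))) : Prop :=
  ∃ q : ℝ → EuclideanSpace ℝ (Fin d),
    AEMeasurable q (volume.restrict (Set.Ico (0 : ℝ) 1)) ∧
    (∀ s : ℝ, 0 ≤ s → s < 1 → q s ∈ orthant d) ∧
    (∀ s t : ℝ, 0 ≤ s → s ≤ t → t < 1 → ∀ i, q s i ≤ q t i) ∧
    μ = Measure.map q (volume.restrict (Set.Ico (0 : ℝ) 1))

open ProbabilityTheory Set Filter Topology

theorem MeasurableSpace.pi_eq_generateFrom_range_Iic {ι : Type*} [Finite ι] :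
    (MeasurableSpace.pi : MeasurableSpace (ι → ℝ)) = generateFrom (range Iic) := by
  have hspan : IsCountablySpanning (range (Iic : ℝ → Set ℝ)) :=
    ⟨fun n : ℕ => Iic (n : ℝ), fun _ => mem_range_self _,
      iUnion_eq_univ_iff.2 fun x => (exists_nat_ge x).imp fun _ hn => mem_Iic.2 hn⟩
  rw [← generateFrom_eq_pi (fun _ => (borel_eq_generateFrom_Iic ℝ).symm) fun _ => hspan]
  congr 1
  ext s
  constructor
  · rintro ⟨t, ht, rfl⟩
    choose x hx using fun i => ht i (mem_univ i)
    exact ⟨x, by simp only [← pi_univ_Iic, hx]⟩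
  · rintro ⟨x, rfl⟩
    exact ⟨fun i => Iic (x i), fun i _ => mem_range_self _, pi_univ_Iic x⟩

theorem EuclideanSpace.ext_of_forall_le {ι : Type*} [Finite ι]
    {μ ν : Measure (EuclideanSpace ℝ ι)} [IsFiniteMeasure μ] (huniv : μ univ = ν univ)
    (h : ∀ x : ι → ℝ, μ {y | ∀ i, y i ≤ x i} = ν {y | ∀ i, y i ≤ x i}) : μ = ν := by
  refine (MeasurableEquiv.toLp 2 (ι → ℝ)).symm.map_measurableEquiv_injective ?_
  refine ext_of_generate_finite _ MeasurableSpace.pi_eq_generateFrom_range_Iic ?_ ?_ ?_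
  · rintro _ ⟨x, rfl⟩ _ ⟨x', rfl⟩ -
    exact ⟨x ⊓ x', Iic_inter_Iic.symm⟩
  · rintro _ ⟨x, rfl⟩
    rw [MeasurableEquiv.map_apply, MeasurableEquiv.map_apply]
    exact h x
  · rwa [MeasurableEquiv.map_apply, MeasurableEquiv.map_apply, preimage_univ]

section

variable {α : Type*} [MeasurableSpace α] {μ : Measure α}

theorem measure_iInter_eq_inf_iInf_of_ae_total {ι : Type*} [Finite ι] [IsFiniteMeasure μ]
    {A : ι → Set α} (hA : ∀ i, NullMeasurableSet (A i) μ)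
    (htotal : ∀ i j, A i ≤ᵐ[μ] A j ∨ A j ≤ᵐ[μ] A i) :
    μ (⋂ i, A i) = μ univ ⊓ ⨅ i, μ (A i) := by
  cases isEmpty_or_nonempty ι
  · simp
  obtain ⟨i₀, hi₀⟩ := Finite.exists_min fun i => μ (A i)
  have hle : ∀ i, A i₀ ≤ᵐ[μ] A i := fun i =>
    (htotal i₀ i).elim id fun h =>
      (ae_eq_of_ae_subset_of_measure_ge h (hi₀ i) (hA i) (measure_ne_top _ _)).symm.le
  have hinter : μ (A i₀) ≤ μ (⋂ i, A i) :=
    measure_mono_ae <| by simpa only [iInter_const] using Filter.EventuallyLE.countable_iInter hle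
  refine le_antisymm (le_inf (measure_mono (subset_univ _)) (le_iInf fun i =>
    measure_mono (iInter_subset _ i))) ?_
  exact inf_le_right.trans ((iInf_le _ i₀).trans hinter)

theorem ae_le_set_total_of_ae_prod [SFinite μ] {β : Type*} [LinearOrder β] {f g : α → β}
    (h : ∀ᵐ p ∂μ.prod μ, f p.2 ≤ f p.1 ∨ g p.1 ≤ g p.2) (a b : β) :
    {x | f x ≤ a} ≤ᵐ[μ] {x | g x ≤ b} ∨ {x | g x ≤ b} ≤ᵐ[μ] {x | f x ≤ a} := by
  simp only [ae_le_set, ← mul_eq_zero, ← Measure.prod_prod]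
  refine measure_mono_null ?_ (ae_iff.1 h)
  rintro ⟨x, x'⟩ ⟨⟨hfx, hgx⟩, ⟨hgx', hfx'⟩⟩
  exact not_or.2 ⟨fun h => hfx' (h.trans hfx), fun h => hgx (h.trans hgx')⟩

end

theorem ae_prod_map_le_or_le_of_monotoneOn {β γ : Type*} [LinearOrder β] [MeasurableSpace β]
    [MeasurableSpace γ] {ν : Measure β} [SFinite ν] {S : Set β} (hS : ∀ᵐ s ∂ν, s ∈ S)
    {q : β → γ} (hq : AEMeasurable q ν) {f g : γ → ℝ} (hf : Measurable f) (hg : Measurable g)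
    (hfq : MonotoneOn (f ∘ q) S) (hgq : MonotoneOn (g ∘ q) S) :
    ∀ᵐ p ∂(ν.map q).prod (ν.map q), f p.2 ≤ f p.1 ∨ g p.1 ≤ g p.2 := by
  have hmeas : MeasurableSet {p : γ × γ | f p.2 ≤ f p.1 ∨ g p.1 ≤ g p.2} :=
    (measurableSet_le (hf.comp measurable_snd) (hf.comp measurable_fst)).union
      (measurableSet_le (hg.comp measurable_fst) (hg.comp measurable_snd))
  have hmk := hq.measurable_mk
  rw [Measure.map_congr hq.ae_eq_mk, Measure.map_prod_map _ _ hmk hmk,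
    ae_map_iff (hmk.prodMap hmk).aemeasurable hmeas]
  have hgood := hS.and hq.ae_eq_mk
  have hS₁ : ∀ᵐ p ∂ν.prod ν, p.1 ∈ S ∧ q p.1 = hq.mk q p.1 :=
    Measure.quasiMeasurePreserving_fst.ae hgood
  have hS₂ : ∀ᵐ p ∂ν.prod ν, p.2 ∈ S ∧ q p.2 = hq.mk q p.2 :=
    Measure.quasiMeasurePreserving_snd.ae hgood
  filter_upwards [hS₁, hS₂] with ⟨s, t⟩ ⟨hs, hqs⟩ ⟨ht, hqt⟩
  simp only [Prod.map, ← hqs, ← hqt]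
  rcases le_total s t with hst | hts
  · exact Or.inr (hgq hs ht hst)
  · exact Or.inl (hfq ht hs hts)

namespace StieltjesFunction

/-- The constraint `0 ≤ x` keeps the set bounded below; without it `sInf` would return its junk
value at `t ≤ 0`. -/
noncomputable def nonnegQuantile (F : StieltjesFunction ℝ) (t : ℝ) : ℝ :=
  sInf {x | 0 ≤ x ∧ t ≤ F x}

variable {F : StieltjesFunction ℝ}

theorem nonnegQuantile_nonneg (t : ℝ) : 0 ≤ F.nonnegQuantile t :=
  Real.sInf_nonneg fun _ hx => hx.1

theorem nonnegQuantile_le_iff (hF : Tendsto F atTop (𝓝 1)) {t x : ℝ} (ht : t < 1) (hx : 0 ≤ x) :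
    F.nonnegQuantile t ≤ x ↔ t ≤ F x := by
  refine ⟨fun h => le_trans ?_ (F.mono h), fun h => csInf_le ⟨0, fun _ hy => hy.1⟩ ⟨hx, h⟩⟩
  have hne : {x | 0 ≤ x ∧ t ≤ F x}.Nonempty :=
    ((hF.eventually (lt_mem_nhds ht)).and (eventually_ge_atTop 0)).exists.imp
      fun _ hy => ⟨hy.2, hy.1.le⟩
  -- right-continuity puts the infimum itself in the set
  refine ge_of_tendsto ((F.right_continuous _).mono Ioi_subset_Ici_self)
    (eventually_nhdsWithin_of_forall fun y hy => ?_)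
  obtain ⟨z, hz, hzy⟩ := exists_lt_of_csInf_lt hne hy
  exact hz.2.trans (F.mono hzy.le)

theorem monotoneOn_nonnegQuantile (hF : Tendsto F atTop (𝓝 1)) :
    MonotoneOn F.nonnegQuantile (Iio 1) := fun _ hs t ht hst =>
  (nonnegQuantile_le_iff hF hs (nonnegQuantile_nonneg t)).2 <|
    hst.trans ((nonnegQuantile_le_iff hF ht (nonnegQuantile_nonneg t)).1 le_rfl)

end StieltjesFunction

theorem Real.volume_restrict_Ico_zero_one_Iic {r : ℝ} (hr : r ≤ 1) :
    volume.restrict (Ico 0 1) (Iic r) = ENNReal.ofReal r := by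
  have hIcc : Iic r ∩ Icc 0 1 = Icc 0 r := by
    ext t
    simp only [mem_inter_iff, mem_Iic, mem_Icc]
    exact ⟨fun h => ⟨h.2.1, h.1⟩, fun h => ⟨h.2, h.1, h.2.trans hr⟩⟩
  rw [Measure.restrict_congr_set Ico_ae_eq_Icc, Measure.restrict_apply measurableSet_Iic, hIcc,
    Real.volume_Icc, sub_zero]

section MarginalQuantile

variable {ι : Type*} (μ : Measure (EuclideanSpace ℝ ι))

noncomputable def marginalQuantile (t : ℝ) : EuclideanSpace ℝ ι :=
  WithLp.toLp 2 fun i => (cdf (μ.map (· i))).nonnegQuantile t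

theorem marginalQuantile_nonneg (t : ℝ) (i : ι) : 0 ≤ marginalQuantile μ t i :=
  StieltjesFunction.nonnegQuantile_nonneg t

theorem monotoneOn_marginalQuantile (i : ι) :
    MonotoneOn (fun t => marginalQuantile μ t i) (Iio 1) :=
  StieltjesFunction.monotoneOn_nonnegQuantile (tendsto_cdf_atTop _)

theorem aemeasurable_marginalQuantile [Countable ι] :
    AEMeasurable (marginalQuantile μ) (volume.restrict (Ico 0 1)) :=
  (MeasurableEquiv.toLp 2 (ι → ℝ)).measurable.comp_aemeasurable <|
    aemeasurable_pi_lambda _ fun i => aemeasurable_restrict_of_monotoneOn measurableSet_Ico <|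
      (monotoneOn_marginalQuantile μ i).mono Ico_subset_Iio_self

variable [IsProbabilityMeasure μ]

theorem marginalQuantile_le_iff {t x : ℝ} (ht : t < 1) (hx : 0 ≤ x) (i : ι) :
    marginalQuantile μ t i ≤ x ↔ ENNReal.ofReal t ≤ μ {y | y i ≤ x} := by
  have hi : Measurable fun y : EuclideanSpace ℝ ι => y i := by fun_prop
  have := Measure.isProbabilityMeasure_map (μ := μ) hi.aemeasurable
  rw [marginalQuantile, PiLp.toLp_apply,
    StieltjesFunction.nonnegQuantile_le_iff (tendsto_cdf_atTop _) ht hx,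
    ← ENNReal.ofReal_le_ofReal_iff (cdf_nonneg _ _), ofReal_cdf,
    Measure.map_apply hi measurableSet_Iic]
  rfl

def IsComonotone : Prop :=
  ∀ i j (a b : ℝ), {y | y i ≤ a} ≤ᵐ[μ] {y | y j ≤ b} ∨ {y | y j ≤ b} ≤ᵐ[μ] {y | y i ≤ a}

variable {μ} [Finite ι]

theorem marginalQuantile_le_iff_le_measureReal
    (hμ : IsComonotone μ)
    {t : ℝ} (ht : t < 1) {x : ι → ℝ} (hx : ∀ i, 0 ≤ x i) :
    (∀ i, marginalQuantile μ t i ≤ x i) ↔ t ≤ μ.real {y | ∀ i, y i ≤ x i} := by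
  rw [measureReal_def, ← ENNReal.ofReal_le_iff_le_toReal (measure_ne_top _ _), ofPred_forall,
    measure_iInter_eq_inf_iInf_of_ae_total
      (fun i => (measurableSet_le (by fun_prop) measurable_const).nullMeasurableSet)
      fun i j => hμ i j _ _, measure_univ, le_inf_iff, le_iInf_iff]
  simp only [marginalQuantile_le_iff μ ht (hx _), ENNReal.ofReal_le_one.2 ht.le, true_and]

theorem map_marginalQuantile
    (hμ : IsComonotone μ)
    (hsupp : ∀ᵐ y ∂μ, ∀ i, 0 ≤ y i) :
    (volume.restrict (Ico 0 1)).map (marginalQuantile μ) = μ := by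
  have hq := aemeasurable_marginalQuantile μ
  have : IsProbabilityMeasure (volume.restrict (Ico (0 : ℝ) 1)) := ⟨by simp⟩
  have := Measure.isProbabilityMeasure_map hq
  refine (EuclideanSpace.ext_of_forall_le (by simp) fun x => ?_).symm
  have hR : MeasurableSet {y : EuclideanSpace ℝ ι | ∀ i, y i ≤ x i} := by
    rw [ofPred_forall]
    exact .iInter fun i => measurableSet_le (by fun_prop) measurable_const
  rw [Measure.map_apply_of_aemeasurable hq hR]
  by_cases hx : ∀ i, 0 ≤ x i
  · have hpre : marginalQuantile μ ⁻¹' {y | ∀ i, y i ≤ x i} =ᵐ[volume.restrict (Ico 0 1)]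
        Iic (μ.real {y | ∀ i, y i ≤ x i}) := by
      filter_upwards [ae_restrict_mem measurableSet_Ico] with t ht
      exact propext (marginalQuantile_le_iff_le_measureReal hμ ht.2 hx)
    rw [measure_congr hpre, Real.volume_restrict_Ico_zero_one_Iic measureReal_le_one,
      ofReal_measureReal]
  · obtain ⟨i, hi⟩ := not_forall.1 hx
    have hμ : μ {y | ∀ i, y i ≤ x i} = 0 :=
      measure_eq_zero_iff_ae_notMem.2 <| hsupp.mono fun y hy hyx => hi ((hy i).trans (hyx i))
    have hpre : marginalQuantile μ ⁻¹' {y | ∀ i, y i ≤ x i} = ∅ :=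
      eq_empty_of_forall_notMem fun t ht => hi ((marginalQuantile_nonneg μ t i).trans (ht i))
    rw [hμ, hpre, measure_empty]

end MarginalQuantile

theorem isMonotoneMeasure_iff_general (d : ℕ)
    (μ : Measure (EuclideanSpace ℝ (Fin d))) [IsProbabilityMeasure μ]
    (hsupp : μ (orthant d)ᶜ = 0) :
    IsMonotoneMeasure d μ ↔
      ∀ i j : Fin d,
        (μ.prod μ) {p : EuclideanSpace ℝ (Fin d) × EuclideanSpace ℝ (Fin d) |
          p.2 i ≤ p.1 i ∨ p.1 j ≤ p.2 j} = 1 := by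
  have hcoord (i : Fin d) : Measurable fun y : EuclideanSpace ℝ (Fin d) => y i := by fun_prop
  have hfull (i j : Fin d) : (μ.prod μ) {p | p.2 i ≤ p.1 i ∨ p.1 j ≤ p.2 j} = 1 ↔
      ∀ᵐ p ∂μ.prod μ, p.2 i ≤ p.1 i ∨ p.1 j ≤ p.2 j := by
    rw [ae_iff_measure_eq, measure_univ]
    exact ((measurableSet_le ((hcoord i).comp measurable_snd)
      ((hcoord i).comp measurable_fst)).union (measurableSet_le ((hcoord j).comp measurable_fst)
        ((hcoord j).comp measurable_snd))).nullMeasurableSet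
  simp only [hfull]
  constructor
  · rintro ⟨q, hq, -, hmono, rfl⟩ i j
    exact ae_prod_map_le_or_le_of_monotoneOn (ae_restrict_mem measurableSet_Ico) hq
      (hcoord i) (hcoord j) (fun s hs t ht hst => hmono s t hs.1 hst ht.2 i)
      (fun s hs t ht hst => hmono s t hs.1 hst ht.2 j)
  · intro h
    refine ⟨marginalQuantile μ, aemeasurable_marginalQuantile μ,
      fun t _ _ i => marginalQuantile_nonneg μ t i,
      fun s t _ hst ht i => monotoneOn_marginalQuantile μ i (hst.trans_lt ht) ht hst, ?_⟩
    exact (map_marginalQuantile (fun i j => ae_le_set_total_of_ae_prod (h i j))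
      (mem_ae_iff.2 hsupp)).symm

/-- a probability measure `μ` on `ℝ_+^d` is monotone if and only if for all
`i, j ∈ {1,…,d}`, `(μ ⊗ μ)({(y,y') : y_i ≥ y'_i or y_j ≤ y'_j}) = 1`. -/
theorem isMonotoneMeasure_iff (d : ℕ) (hd : 1 ≤ d)
    (μ : Measure (EuclideanSpace ℝ (Fin d))) [IsProbabilityMeasure μ]
    (hsupp : μ (orthant d)ᶜ = 0) :
    IsMonotoneMeasure d μ ↔
      ∀ i j : Fin d,
        (μ.prod μ) {p : EuclideanSpace ℝ (Fin d) × EuclideanSpace ℝ (Fin d) |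
          p.2 i ≤ p.1 i ∨ p.1 j ≤ p.2 j} = 1 :=
  isMonotoneMeasure_iff_general d μ hsupp
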